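/- arXiv:2501.12663 — 5 statements merged into one kernel-verified Lean document; each statement's English description precedes it below -/
import Mathlib

section
/- The function η(r_c) = r_c³(4a² - r_c(r_c - 3)²)/(a²(r_c - 1)²) vanishes at r_c = r₁ and r_c = r₂ (where r₁, r₂ are defined via r(r-3)² = 4a²) and is strictly positive for r_c strictly between r₁ and r₂. -/
/-- The function `η(r_c) = r_c³(4a² - r_c(r_c-3)²)/(a²(r_c-1)²)` vanishes at `r₁`, `r₂`
and is strictly positive strictly between them. -/
theorem stmt_4 (a : ℝ) (ha0 : 0 < a) (ha1 : a < 1) :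
    let η : ℝ → ℝ := fun rc => rc ^ 3 * (4 * a ^ 2 - rc * (rc - 3) ^ 2) / (a ^ 2 * (rc - 1) ^ 2)
    let r₁ : ℝ := 2 + 2 * Real.cos (2 / 3 * Real.arccos (-a))
    let r₂ : ℝ := 2 + 2 * Real.cos (2 / 3 * Real.arccos a)
    η r₁ = 0 ∧ η r₂ = 0 ∧ ∀ rc : ℝ, r₁ < rc → rc < r₂ → 0 < η rc := by
  intro η r₁ r₂
  have hc1 : Real.cos (Real.arccos (-a)) = -a :=
    Real.cos_arccos (by linarith) (by linarith)
  have hc2 : Real.cos (Real.arccos a) = a :=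
    Real.cos_arccos (by linarith) (by linarith)
  have key : ∀ θ : ℝ, (2 + 2 * Real.cos (2/3*θ)) * (2 + 2 * Real.cos (2/3*θ) - 3)^2
      = 2 * (Real.cos (2*θ) + 1) := by
    intro θ
    have h3 := Real.cos_three_mul (2/3*θ)
    have h : (3:ℝ) * (2/3*θ) = 2*θ := by ring
    rw [h] at h3
    nlinarith [h3]
  have h2θ₁ : Real.cos (2 * Real.arccos (-a)) = 2*a^2 - 1 := by
    rw [Real.cos_two_mul, hc1]; ring
  have h2θ₂ : Real.cos (2 * Real.arccos a) = 2*a^2 - 1 := by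
    rw [Real.cos_two_mul, hc2]
  have hr1d : r₁ = 2 + 2 * Real.cos (2 / 3 * Real.arccos (-a)) := rfl
  have hr2d : r₂ = 2 + 2 * Real.cos (2 / 3 * Real.arccos a) := rfl
  have h1 : r₁ * (r₁ - 3)^2 = 4*a^2 := by
    have := key (Real.arccos (-a))
    rw [h2θ₁] at this
    rw [hr1d]; linarith
  have h2 : r₂ * (r₂ - 3)^2 = 4*a^2 := by
    have := key (Real.arccos a)
    rw [h2θ₂] at this
    rw [hr2d]; linarith
  -- r₁ > 1
  have hθ₁lt : Real.arccos (-a) < Real.pi := by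
    rw [Real.arccos_neg]
    have : 0 < Real.arccos a := Real.arccos_pos.2 ha1
    linarith
  have hθ₁nn : 0 ≤ Real.arccos (-a) := Real.arccos_nonneg _
  have hcos23 : Real.cos (2*Real.pi/3) = -(1/2) := by
    have : 2*Real.pi/3 = Real.pi - Real.pi/3 := by ring
    rw [this, Real.cos_pi_sub, Real.cos_pi_div_three]
  have hr₁gt : (1:ℝ) < r₁ := by
    have hpi : 0 < Real.pi := Real.pi_pos
    have hmem1 : 2/3 * Real.arccos (-a) ∈ Set.Icc 0 Real.pi :=
      ⟨by linarith, by linarith⟩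
    have hmem2 : 2*Real.pi/3 ∈ Set.Icc 0 Real.pi := ⟨by linarith, by linarith⟩
    have := Real.strictAntiOn_cos hmem1 hmem2 (by linarith)
    rw [hcos23] at this
    rw [hr1d]; linarith
  have ha2 : 0 < a^2 := by positivity
  refine ⟨?_, ?_, ?_⟩
  · show r₁ ^ 3 * (4 * a ^ 2 - r₁ * (r₁ - 3) ^ 2) / (a ^ 2 * (r₁ - 1) ^ 2) = 0
    rw [h1]; simp
  · show r₂ ^ 3 * (4 * a ^ 2 - r₂ * (r₂ - 3) ^ 2) / (a ^ 2 * (r₂ - 1) ^ 2) = 0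
    rw [h2]; simp
  · intro rc hrc1 hrc2
    have hrc : 1 < rc := lt_trans hr₁gt hrc1
    have hnum : 0 < 4 * a ^ 2 - rc * (rc - 3) ^ 2 := by
      rcases le_or_gt rc 3 with hle | hgt
      · nlinarith [mul_pos (sub_pos.2 hrc1) (mul_pos (by linarith : (0:ℝ) < r₁ - 1) (by linarith : (0:ℝ) < 3 - r₁)),
          mul_nonneg (le_of_lt (sub_pos.2 hrc1)) (mul_nonneg (by linarith : (0:ℝ) ≤ rc - 1) (by linarith : (0:ℝ) ≤ 3 - rc)),
          sq_nonneg (rc - r₁), sq_nonneg (rc + r₁ - 4)]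
      · nlinarith [mul_pos (sub_pos.2 hrc2) (mul_pos (by linarith : (0:ℝ) < r₂ - 1) (by linarith : (0:ℝ) < r₂ - 3)),
          mul_nonneg (le_of_lt (sub_pos.2 hrc2)) (mul_nonneg (by linarith : (0:ℝ) ≤ rc - 1) (by linarith : (0:ℝ) ≤ rc - 3)),
          sq_nonneg (rc - r₂), sq_nonneg (rc + r₂ - 4)]
    show 0 < rc ^ 3 * (4 * a ^ 2 - rc * (rc - 3) ^ 2) / (a ^ 2 * (rc - 1) ^ 2)
    have h1' : (0:ℝ) < rc - 1 := by linarith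
    positivity
end

section
/- The critical-point conditions Θ(θ_c) = 0 and Θ'(θ_c) = 0 for θ_c ∈ (0, π) with θ_c ≠ π/2 are satisfied exactly when (λ, η) = (± a sin²θ_c, -a² cos⁴θ_c). -/
/-! For `sin θ ≠ 0` the derivative simplifies, using `sin² + cos² = 1`, to
`Θ'(θ) = 2 cos θ (λ² - a² sin⁴θ) / sin³θ`. Away from `θ = π/2` it vanishes exactly when
`λ² = (a sin²θ)²`, and then `Θ(θ) = η + a² cos⁴θ`. -/

open Real

theorem hasDerivAt_add_cos_sq_mul_sub_div_sin_sq (a lam η : ℝ) {x : ℝ} (hx : sin x ≠ 0) :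
    HasDerivAt (fun θ => η + cos θ ^ 2 * (a ^ 2 - lam ^ 2 / sin θ ^ 2))
      (2 * cos x * (lam ^ 2 - a ^ 2 * sin x ^ 4) / sin x ^ 3) x := by
  have h := (hasDerivAt_const x η).add (((hasDerivAt_cos x).pow 2).mul
    ((hasDerivAt_const x (a ^ 2)).sub
      ((hasDerivAt_const x (lam ^ 2)).div ((hasDerivAt_sin x).pow 2) (pow_ne_zero 2 hx))))
  refine h.congr_deriv ?_
  simp only [Pi.pow_apply, Pi.sub_apply, Pi.div_apply, Nat.cast_ofNat]
  field_simp
  linear_combination 2 * sin x * cos x * lam ^ 2 * sin_sq_add_cos_sq x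

theorem cos_ne_zero_of_mem_Ioo_of_ne_pi_div_two {x : ℝ} (hx : x ∈ Set.Ioo 0 π)
    (hx' : x ≠ π / 2) : cos x ≠ 0 := fun h =>
  hx' <| injOn_cos (Set.Ioo_subset_Icc_self hx) ⟨by positivity, by linarith [pi_pos]⟩
    (h.trans cos_pi_div_two.symm)

theorem add_sq_mul_sub_div_sq_eq_zero_and_critical_iff {a lam η s c : ℝ} (hs : s ≠ 0)
    (hc : c ≠ 0) (hsc : s ^ 2 + c ^ 2 = 1) :
    (η + c ^ 2 * (a ^ 2 - lam ^ 2 / s ^ 2) = 0 ∧ 2 * c * (lam ^ 2 - a ^ 2 * s ^ 4) / s ^ 3 = 0) ↔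
      ((lam = a * s ^ 2 ∨ lam = -(a * s ^ 2)) ∧ η = -(a ^ 2 * c ^ 4)) := by
  have hcrit : 2 * c * (lam ^ 2 - a ^ 2 * s ^ 4) / s ^ 3 = 0 ↔ lam ^ 2 = (a * s ^ 2) ^ 2 := by
    constructor
    · intro h
      have h' : lam ^ 2 - a ^ 2 * s ^ 4 = 0 := by simpa [hc, hs] using h
      linear_combination h'
    · intro h
      rw [show lam ^ 2 - a ^ 2 * s ^ 4 = 0 by linear_combination h]
      simp
  rw [hcrit, ← sq_eq_sq_iff_eq_or_eq_neg, and_comm, and_congr_right_iff]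
  intro hlam
  have hvalue : c ^ 2 * (a ^ 2 - lam ^ 2 / s ^ 2) = a ^ 2 * c ^ 4 := by
    rw [hlam]
    field_simp
    linear_combination -a ^ 2 * hsc
  rw [hvalue, add_eq_zero_iff_eq_neg]

theorem stmt_9_general (a lam η θc : ℝ) (hθc : θc ∈ Set.Ioo 0 Real.pi)
    (hθc' : θc ≠ Real.pi / 2) :
    let Θ : ℝ → ℝ := fun θ => η + Real.cos θ ^ 2 * (a ^ 2 - lam ^ 2 / Real.sin θ ^ 2)
    (Θ θc = 0 ∧ deriv Θ θc = 0) ↔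
      ((lam = a * Real.sin θc ^ 2 ∨ lam = -(a * Real.sin θc ^ 2)) ∧
        η = -(a ^ 2 * Real.cos θc ^ 4)) := by
  intro Θ
  have hs : sin θc ≠ 0 := (sin_pos_of_pos_of_lt_pi hθc.1 hθc.2).ne'
  rw [(hasDerivAt_add_cos_sq_mul_sub_div_sin_sq a lam η hs).deriv]
  exact add_sq_mul_sub_div_sq_eq_zero_and_critical_iff hs
    (cos_ne_zero_of_mem_Ioo_of_ne_pi_div_two hθc hθc') (sin_sq_add_cos_sq θc)

/-- The conditions `Θ(θ_c) = 0` and `Θ'(θ_c) = 0` for `θ_c ∈ (0, π)`, `θ_c ≠ π/2`, hold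
exactly when `(λ, η) = (± a sin²θ_c, -a² cos⁴θ_c)`. -/
theorem stmt_9 (a lam η θc : ℝ) (ha : 0 < a) (hθc : θc ∈ Set.Ioo 0 Real.pi)
    (hθc' : θc ≠ Real.pi / 2) :
    let Θ : ℝ → ℝ := fun θ => η + Real.cos θ ^ 2 * (a ^ 2 - lam ^ 2 / Real.sin θ ^ 2)
    (Θ θc = 0 ∧ deriv Θ θc = 0) ↔
      ((lam = a * Real.sin θc ^ 2 ∨ lam = -(a * Real.sin θc ^ 2)) ∧
        η = -(a ^ 2 * Real.cos θc ^ 4)) :=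
  stmt_9_general a lam η θc hθc hθc'
end

section
/- Along the bifurcation curve Σ^(r), the identity R(r) = (r - r_c)²(r² + 2r_c r - 3r_c² + Z²) holds, where Z² = 4r_c(3r_c - a² - 3r_c² + r_c³)/(1 - r_c)². -/
/-!
`R` is a monic quartic with no cubic term, `R(r) = (r² + A)² - B Δ(r)` with `A = a² - aλ` and
`B = η + (λ - a)²`. Comparing the coefficients of `r²`, `r` and `1` with those of
`(r - r_c)² (r² + 2 r_c r - 3 r_c² + Z²)` reduces the identity to three rational identities in
`a` and `r_c`, which hold as soon as the denominators `a` and `1 - r_c` do not vanish.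
-/

theorem quartic_eq_sq_mul_of_coeff_eq {R : Type*} [CommRing R] {a A B s Z : R} (r : R)
    (h₂ : 2 * A - B = Z - 6 * s ^ 2) (h₁ : B = 4 * s ^ 3 - s * Z)
    (h₀ : A ^ 2 - B * a ^ 2 = s ^ 2 * (Z - 3 * s ^ 2)) :
    (r ^ 2 + A) ^ 2 - B * (r ^ 2 - 2 * r + a ^ 2)
      = (r - s) ^ 2 * (r ^ 2 + 2 * s * r - 3 * s ^ 2 + Z) := by
  linear_combination r ^ 2 * h₂ + 2 * r * h₁ + h₀

theorem stmt_11_general (a rc : ℝ) (ha0 : 0 < a) (hrc : 1 < rc) :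
    let lam : ℝ := ((1 + rc) * a ^ 2 + rc ^ 2 * (rc - 3)) / (a * (1 - rc))
    let η : ℝ := rc ^ 3 * (4 * a ^ 2 - rc * (rc - 3) ^ 2) / (a ^ 2 * (rc - 1) ^ 2)
    let Zsq : ℝ := 4 * rc * (3 * rc - (a ^ 2 + 3 * rc ^ 2) + rc ^ 3) / (1 - rc) ^ 2
    ∀ r : ℝ,
      (r ^ 2 + a ^ 2 - a * lam) ^ 2 - (η + (lam - a) ^ 2) * (r ^ 2 - 2 * r + a ^ 2)
        = (r - rc) ^ 2 * (r ^ 2 + 2 * rc * r - 3 * rc ^ 2 + Zsq) := by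
  intro lam η Zsq r
  have ha : a ≠ 0 := ha0.ne'
  have hrc₁ : 1 - rc ≠ 0 := by linarith
  have hrc₂ : rc - 1 ≠ 0 := by linarith
  have key := quartic_eq_sq_mul_of_coeff_eq (a := a) (A := a ^ 2 - a * lam)
    (B := η + (lam - a) ^ 2) (s := rc) (Z := Zsq) r
    (by simp only [lam, η, Zsq]; field_simp; ring)
    (by simp only [lam, η, Zsq]; field_simp; ring)
    (by simp only [lam, η, Zsq]; field_simp; ring)
  linear_combination key

/-- Along the bifurcation curve `Σ^(r)`, the identity
`R(r) = (r - r_c)²(r² + 2 r_c r - 3 r_c² + Z²)` holds. -/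
theorem stmt_11 (a rc : ℝ) (ha0 : 0 < a) (ha1 : a < 1) (hrc : 1 < rc) :
    let lam : ℝ := ((1 + rc) * a ^ 2 + rc ^ 2 * (rc - 3)) / (a * (1 - rc))
    let η : ℝ := rc ^ 3 * (4 * a ^ 2 - rc * (rc - 3) ^ 2) / (a ^ 2 * (rc - 1) ^ 2)
    let Zsq : ℝ := 4 * rc * (3 * rc - (a ^ 2 + 3 * rc ^ 2) + rc ^ 3) / (1 - rc) ^ 2
    ∀ r : ℝ,
      (r ^ 2 + a ^ 2 - a * lam) ^ 2 - (η + (lam - a) ^ 2) * (r ^ 2 - 2 * r + a ^ 2)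
        = (r - rc) ^ 2 * (r ^ 2 + 2 * rc * r - 3 * rc ^ 2 + Zsq) :=
  stmt_11_general a rc ha0 hrc
end

section
/- The quadratic (in Ω) expression Δ(r₀) - a²sin²θ₀ + Ω(4ar₀ - A₀Ω)sin²θ₀ is strictly positive if and only if Ω ∈ (Ω₋, Ω₊), where Ω± = (a ± √Δ(r₀)/sinθ₀)/(r₀² + a² ± a√Δ(r₀) sinθ₀). -/
/-!
Writing `d = √Δ` and `s = sin θ₀`, the relation `2 r₀ = r₀² + a² - d²` makes the quadratic factor as
`(a s + d - s (r₀² + a² + a d s) Ω) (s (r₀² + a² - a d s) Ω - (a s - d))`.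
Outside the horizon `Δ > 0`, so `d` is real, and `|a d s| < r₀² + a²` since `a² Δ < (r₀² + a²)²`;
hence both leading coefficients are positive and the roots are exactly `Ω₊` and `Ω₋`, with
`Ω₋ < Ω₊`.
-/

open Real Set

lemma pos_mul_sub_mul_mul_sub_iff_mem_Ioo {K : Type*} [Field K] [LinearOrder K]
    [IsStrictOrderedRing K] {k l m p x : K} (hk : 0 < k) (hl : 0 < l) (hmp : m < p) :
    0 < k * (p - x) * (l * (x - m)) ↔ x ∈ Ioo m p := by
  rw [mul_mul_mul_comm, mul_pos_iff_of_pos_left (mul_pos hk hl), mul_pos_iff]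
  constructor
  · rintro (⟨hp, hm⟩ | ⟨hp, hm⟩)
    · exact ⟨by linarith, by linarith⟩
    · linarith
  · rintro ⟨hm, hp⟩
    exact Or.inl ⟨by linarith, by linarith⟩

lemma sq_sub_two_mul_add_sq_pos {a r : ℝ} (hr : 1 + √(1 - a ^ 2) < r) :
    0 < r ^ 2 - 2 * r + a ^ 2 := by
  have hsq : 1 - a ^ 2 ≤ √(1 - a ^ 2) ^ 2 := by
    rw [sq_sqrt']
    exact le_max_left _ _
  nlinarith [sqrt_nonneg (1 - a ^ 2)]

lemma abs_mul_mul_lt_sq_add_sq {a r s d : ℝ} (hr : 0 < r) (hs : s ^ 2 ≤ 1)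
    (hd : d ^ 2 = r ^ 2 - 2 * r + a ^ 2) : |a * d * s| < r ^ 2 + a ^ 2 := by
  refine abs_lt_of_sq_lt_sq ?_ (by positivity)
  have hds : (a * d * s) ^ 2 ≤ (a * d) ^ 2 := by
    nlinarith [mul_nonneg (sq_nonneg (a * d)) (sub_nonneg.mpr hs)]
  nlinarith [sq_nonneg a, mul_pos hr hr]

lemma kerr_quadratic_eq_mul {K : Type*} [Field K] {a r s d Ω : K} (hs : s ≠ 0)
    (hm : r ^ 2 + a ^ 2 - a * d * s ≠ 0) (hp : r ^ 2 + a ^ 2 + a * d * s ≠ 0)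
    (hd : d ^ 2 = r ^ 2 - 2 * r + a ^ 2) :
    r ^ 2 - 2 * r + a ^ 2 - a ^ 2 * s ^ 2 +
        Ω * (4 * a * r - ((r ^ 2 + a ^ 2) ^ 2 - a ^ 2 * (r ^ 2 - 2 * r + a ^ 2) * s ^ 2) * Ω) * s ^ 2 =
      s * (r ^ 2 + a ^ 2 + a * d * s) * ((a + d / s) / (r ^ 2 + a ^ 2 + a * d * s) - Ω) *
        (s * (r ^ 2 + a ^ 2 - a * d * s) * (Ω - (a - d / s) / (r ^ 2 + a ^ 2 - a * d * s))) := by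
  have hpfac : s * (r ^ 2 + a ^ 2 + a * d * s) * ((a + d / s) / (r ^ 2 + a ^ 2 + a * d * s) - Ω) =
      a * s + d - s * (r ^ 2 + a ^ 2 + a * d * s) * Ω := by
    rw [mul_sub, mul_assoc s, mul_div_cancel₀ _ hp, mul_add, mul_div_cancel₀ _ hs]
    ring
  have hmfac : s * (r ^ 2 + a ^ 2 - a * d * s) * (Ω - (a - d / s) / (r ^ 2 + a ^ 2 - a * d * s)) =
      s * (r ^ 2 + a ^ 2 - a * d * s) * Ω - (a * s - d) := by
    rw [mul_sub, mul_assoc s _ (_ / _), mul_div_cancel₀ _ hm, mul_sub s a, mul_div_cancel₀ _ hs]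
    ring
  rw [hpfac, hmfac]
  linear_combination (-(1 - a * s ^ 2 * Ω) ^ 2) * hd

lemma kerr_root_lt_root {a r s d : ℝ} (hr : 0 < r) (hs : 0 < s) (hs1 : s ^ 2 ≤ 1) (hd : 0 < d)
    (hm : 0 < r ^ 2 + a ^ 2 - a * d * s) (hp : 0 < r ^ 2 + a ^ 2 + a * d * s) :
    (a - d / s) / (r ^ 2 + a ^ 2 - a * d * s) < (a + d / s) / (r ^ 2 + a ^ 2 + a * d * s) := by
  rw [div_lt_div_iff₀ hm hp, ← sub_pos]
  have hdiff : (a + d / s) * (r ^ 2 + a ^ 2 - a * d * s) - (a - d / s) * (r ^ 2 + a ^ 2 + a * d * s) =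
      2 * d * (r ^ 2 + a ^ 2 * (1 - s ^ 2)) / s := by
    field_simp
    ring
  rw [hdiff]
  have : 0 ≤ a ^ 2 * (1 - s ^ 2) := mul_nonneg (sq_nonneg a) (sub_nonneg.mpr hs1)
  positivity

theorem stmt_13_general (a r₀ θ₀ : ℝ)
    (hr : 1 + Real.sqrt (1 - a ^ 2) < r₀) (hθ : θ₀ ∈ Set.Ioo 0 Real.pi) :
    let Δ : ℝ := r₀ ^ 2 - 2 * r₀ + a ^ 2
    let A₀ : ℝ := (r₀ ^ 2 + a ^ 2) ^ 2 - a ^ 2 * Δ * Real.sin θ₀ ^ 2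
    let Ωm : ℝ := (a - Real.sqrt Δ / Real.sin θ₀) /
      (r₀ ^ 2 + a ^ 2 - a * Real.sqrt Δ * Real.sin θ₀)
    let Ωp : ℝ := (a + Real.sqrt Δ / Real.sin θ₀) /
      (r₀ ^ 2 + a ^ 2 + a * Real.sqrt Δ * Real.sin θ₀)
    ∀ Ω : ℝ,
      0 < Δ - a ^ 2 * Real.sin θ₀ ^ 2 + Ω * (4 * a * r₀ - A₀ * Ω) * Real.sin θ₀ ^ 2 ↔
        Ω ∈ Set.Ioo Ωm Ωp := by
  intro Δ A₀ Ωm Ωp Ω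
  have hs : 0 < sin θ₀ := sin_pos_of_pos_of_lt_pi hθ.1 hθ.2
  have hr₀ : 0 < r₀ := by linarith [sqrt_nonneg (1 - a ^ 2)]
  have hΔ : 0 < Δ := sq_sub_two_mul_add_sq_pos hr
  have hd : √Δ ^ 2 = Δ := sq_sqrt hΔ.le
  obtain ⟨hlower, hupper⟩ := abs_lt.mp (abs_mul_mul_lt_sq_add_sq hr₀ (sin_sq_le_one θ₀) hd)
  have hm' : 0 < r₀ ^ 2 + a ^ 2 - a * √Δ * sin θ₀ := sub_pos.mpr hupper
  have hp' : 0 < r₀ ^ 2 + a ^ 2 + a * √Δ * sin θ₀ := by linarith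
  rw [← pos_mul_sub_mul_mul_sub_iff_mem_Ioo (mul_pos hs hp') (mul_pos hs hm')
    (kerr_root_lt_root hr₀ hs (sin_sq_le_one θ₀) (sqrt_pos.mpr hΔ) hm' hp')]
  exact iff_of_eq (congrArg _ (kerr_quadratic_eq_mul hs.ne' hm'.ne' hp'.ne' hd))

/-- The quadratic (in `Ω`) `Δ - a²sin²θ₀ + Ω(4ar₀ - A₀Ω)sin²θ₀` is strictly positive
iff `Ω ∈ (Ω₋, Ω₊)`. -/
theorem stmt_13 (a r₀ θ₀ : ℝ) (ha0 : 0 < a) (ha1 : a < 1)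
    (hr : 1 + Real.sqrt (1 - a ^ 2) < r₀) (hθ : θ₀ ∈ Set.Ioo 0 Real.pi) :
    let Δ : ℝ := r₀ ^ 2 - 2 * r₀ + a ^ 2
    let A₀ : ℝ := (r₀ ^ 2 + a ^ 2) ^ 2 - a ^ 2 * Δ * Real.sin θ₀ ^ 2
    let Ωm : ℝ := (a - Real.sqrt Δ / Real.sin θ₀) /
      (r₀ ^ 2 + a ^ 2 - a * Real.sqrt Δ * Real.sin θ₀)
    let Ωp : ℝ := (a + Real.sqrt Δ / Real.sin θ₀) /
      (r₀ ^ 2 + a ^ 2 + a * Real.sqrt Δ * Real.sin θ₀)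
    ∀ Ω : ℝ,
      0 < Δ - a ^ 2 * Real.sin θ₀ ^ 2 + Ω * (4 * a * r₀ - A₀ * Ω) * Real.sin θ₀ ^ 2 ↔
        Ω ∈ Set.Ioo Ωm Ωp :=
  stmt_13_general a r₀ θ₀ hr hθ
end

section
/- In the equatorial plane (θ₀ = π/2) for a Carter observer, the shadow boundary satisfies sin β(r_c) = -r_c(r_c² - 3r_c + 2a²)/(2a r_c √Δ(r_c)) = -(r_c² - 3r_c + 2a²)/(2a√Δ(r_c)), and this quantity lies in [-1, 1] for all r_c ∈ [r₁, r₂]. -/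
/-- In the equatorial plane for a Carter observer, the shadow boundary satisfies
`sin β(r_c) = -r_c(r_c² - 3r_c + 2a²)/(2 a r_c √Δ(r_c)) = -(r_c² - 3r_c + 2a²)/(2a√Δ(r_c))`,
and this quantity lies in `[-1, 1]` for all `r_c ∈ [r₁, r₂]`. -/
theorem stmt_19 (a : ℝ) (ha0 : 0 < a) (ha1 : a < 1) :
    let Δ : ℝ → ℝ := fun r => r ^ 2 - 2 * r + a ^ 2
    let r₁ : ℝ := 2 + 2 * Real.cos (2 / 3 * Real.arccos (-a))
    let r₂ : ℝ := 2 + 2 * Real.cos (2 / 3 * Real.arccos a)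
    ∀ rc : ℝ, rc ∈ Set.Icc r₁ r₂ →
      (-(rc * (rc ^ 2 - 3 * rc + 2 * a ^ 2)) / (2 * a * rc * Real.sqrt (Δ rc))
        = -(rc ^ 2 - 3 * rc + 2 * a ^ 2) / (2 * a * Real.sqrt (Δ rc))) ∧
      -(rc ^ 2 - 3 * rc + 2 * a ^ 2) / (2 * a * Real.sqrt (Δ rc)) ∈
        Set.Icc (-1 : ℝ) 1 := by
  intro Δ r₁ r₂ rc hrc
  obtain ⟨hl, hr⟩ := hrc
  have hΔdef : Δ rc = rc ^ 2 - 2 * rc + a ^ 2 := rfl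
  have hpi := Real.pi_pos
  -- r₁ facts
  set x₁ : ℝ := Real.arccos (-a) / 3 with hx₁def
  have hc3₁ : Real.cos (3 * x₁) = -a := by
    rw [show 3 * x₁ = Real.arccos (-a) by rw [hx₁def]; ring]
    exact Real.cos_arccos (by linarith) (by linarith)
  have h3₁ := Real.cos_three_mul x₁
  rw [hc3₁] at h3₁
  have hr₁ : r₁ = 4 * Real.cos x₁ ^ 2 := by
    show 2 + 2 * Real.cos (2 / 3 * Real.arccos (-a)) = _
    rw [show 2 / 3 * Real.arccos (-a) = 2 * x₁ by rw [hx₁def]; ring, Real.cos_two_mul]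
    ring
  have hcube₁ : r₁ * (r₁ - 3) ^ 2 = 4 * a ^ 2 := by
    rw [hr₁, show a = -(4 * Real.cos x₁ ^ 3 - 3 * Real.cos x₁) by linarith]; ring
  have hx₁0 : 0 ≤ x₁ := div_nonneg (Real.arccos_nonneg _) (by norm_num)
  have hx₁le : x₁ ≤ Real.pi / 3 := by
    rw [hx₁def]
    have := Real.arccos_le_pi (-a); linarith
  have hc₁ : 1 / 2 ≤ Real.cos x₁ := by
    have h := Real.cos_le_cos_of_nonneg_of_le_pi hx₁0 (by linarith) hx₁le
    rwa [show Real.pi / 3 = Real.pi / 3 by rfl, Real.cos_pi_div_three] at h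
  have hr₁1 : 1 ≤ r₁ := by nlinarith
  -- r₂ facts
  set x₂ : ℝ := Real.arccos a / 3 with hx₂def
  have hc3₂ : Real.cos (3 * x₂) = a := by
    rw [show 3 * x₂ = Real.arccos a by rw [hx₂def]; ring]
    exact Real.cos_arccos (by linarith) (by linarith)
  have h3₂ := Real.cos_three_mul x₂
  rw [hc3₂] at h3₂
  have hr₂ : r₂ = 4 * Real.cos x₂ ^ 2 := by
    show 2 + 2 * Real.cos (2 / 3 * Real.arccos a) = _
    rw [show 2 / 3 * Real.arccos a = 2 * x₂ by rw [hx₂def]; ring, Real.cos_two_mul]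
    ring
  have hcube₂ : r₂ * (r₂ - 3) ^ 2 = 4 * a ^ 2 := by
    rw [hr₂, h3₂]; ring
  have hr₂4 : r₂ ≤ 4 := by
    have := Real.cos_le_one x₂
    have := Real.neg_one_le_cos x₂
    nlinarith
  clear_value Δ r₁ r₂
  have hrc1 : 1 ≤ rc := le_trans hr₁1 hl
  have hcube : rc * (rc - 3) ^ 2 ≤ 4 * a ^ 2 := by
    rcases le_total rc 3 with h | h
    · have hp1 : (0:ℝ) ≤ r₁ - 1 := by linarith
      have hp2 : (0:ℝ) ≤ rc - r₁ := by linarith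
      have hp3 : (0:ℝ) ≤ 3 - rc := by linarith
      have key : r₁ * (r₁ - 3) ^ 2 - rc * (rc - 3) ^ 2 =
          (rc - r₁) * (3 * ((r₁ - 1) * (3 - rc)) + 3 / 2 * ((r₁ - 1) * (rc - r₁))
            + 1 / 2 * ((rc - r₁) * (rc - r₁)) + 3 / 2 * ((rc - r₁) * (3 - rc))) := by ring
      linarith [mul_nonneg hp2 (mul_nonneg hp1 hp3), mul_nonneg hp2 (mul_nonneg hp1 hp2),
        mul_nonneg hp2 (mul_nonneg hp2 hp2), mul_nonneg hp2 (mul_nonneg hp2 hp3), key, hcube₁]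
    · have hq1 : (0:ℝ) ≤ rc - 3 := by linarith
      have hq2 : (0:ℝ) ≤ r₂ - rc := by linarith
      have hq3 : (0:ℝ) ≤ r₂ - 3 := by linarith
      have key : r₂ * (r₂ - 3) ^ 2 - rc * (rc - 3) ^ 2 =
          (r₂ - rc) * (rc * (rc - 3)) + (r₂ - rc) * (r₂ * (r₂ - 3))
            + (r₂ - rc) * ((rc - 3) * (r₂ - 3)) := by ring
      linarith [mul_nonneg hq2 (mul_nonneg (by linarith : (0:ℝ) ≤ rc) hq1),
        mul_nonneg hq2 (mul_nonneg (by linarith : (0:ℝ) ≤ r₂) hq3),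
        mul_nonneg hq2 (mul_nonneg hq1 hq3), key, hcube₂]
  clear hc3₁ h3₁ hr₁ hcube₁ hx₁0 hx₁le hc₁ hc3₂ h3₂ hr₂ hcube₂ hr₂4 hr₁1 hl hr hpi
  have hΔ0 : 0 ≤ Δ rc := by
    rw [hΔdef]
    nlinarith [hcube, sq_nonneg (rc ^ 2 - 3 * rc + 2 * a ^ 2), mul_pos ha0 ha0,
      mul_nonneg (by linarith : (0:ℝ) ≤ rc) (by linarith : (0:ℝ) ≤ 4 * a ^ 2 - rc * (rc - 3) ^ 2)]
  set s : ℝ := Real.sqrt (Δ rc) with hsdef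
  have hs0 : 0 ≤ s := Real.sqrt_nonneg _
  have hs2 : s ^ 2 = rc ^ 2 - 2 * rc + a ^ 2 := by
    rw [hsdef, Real.sq_sqrt hΔ0, hΔdef]
  have hN : (rc ^ 2 - 3 * rc + 2 * a ^ 2) ^ 2 ≤ 4 * a ^ 2 * s ^ 2 := by
    rw [hs2]; nlinarith
  refine ⟨?_, ?_⟩
  · rw [show -(rc * (rc ^ 2 - 3 * rc + 2 * a ^ 2)) = rc * -(rc ^ 2 - 3 * rc + 2 * a ^ 2) by ring,
      show 2 * a * rc * s = rc * (2 * a * s) by ring]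
    exact mul_div_mul_left _ _ (by linarith)
  · rcases eq_or_lt_of_le hs0 with h0 | hsp
    · rw [← h0]; norm_num
    · have hD : 0 < 2 * a * s := by positivity
      rw [Set.mem_Icc]
      constructor
      · rw [le_div_iff₀ hD]
        nlinarith [hN, hD, sq_nonneg (rc ^ 2 - 3 * rc + 2 * a ^ 2 - 2 * a * s)]
      · rw [div_le_one hD]
        nlinarith [hN, hD, sq_nonneg (rc ^ 2 - 3 * rc + 2 * a ^ 2 + 2 * a * s)]
end
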